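/- Let u be a sequence of length at least 6 with exactly three distinct letters, whose first three letters a, b, c are pairwise distinct, and whose last three letters form a permutation of {a,b,c}. Then for every integer n ≥ 3, the sequence s[n] over the alphabet {1,…,n} is u-semisaturated. -/

import Mathlib

/-- `v` is a *copy* of `u`: it is obtained from `u` by an injective renaming of letters. -/
def IsCopy {α β : Type*} (v : List β) (u : List α) : Prop :=
  ∃ f : α → β, (∀ x ∈ u, ∀ y ∈ u, f x = f y → x = y) ∧ v = u.map f

/-- `s` contains a copy of `u` as a (not necessarily contiguous) subsequence. -/
def ContainsCopy {α β : Type*} (s : List β) (u : List α) : Prop :=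
  ∃ v : List β, v.Sublist s ∧ IsCopy v u

/-- `s` is `r`-sparse: any `r` consecutive letters of `s` are pairwise distinct. -/
def Sparse {A : Type*} (r : ℕ) (s : List A) : Prop :=
  ∀ (i j : ℕ) (hij : i < j) (hj : j < s.length), j < i + r →
    s.get ⟨i, hij.trans hj⟩ ≠ s.get ⟨j, hj⟩

/-- `s` is a `u`-saturated sequence over the alphabet `alphabet`:
`s` uses letters from `alphabet`, is `r`-sparse (where `r` is the number of distinct
letters of `u`), avoids `u`, and inserting any letter of `alphabet` at any position
violates `r`-sparsity or creates a copy of `u`. -/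
def Saturated {α A : Type*} [DecidableEq α] (u : List α) (s : List A) (alphabet : Set A) : Prop :=
  Sparse u.toFinset.card s ∧ ¬ ContainsCopy s u ∧ (∀ x ∈ s, x ∈ alphabet) ∧
  ∀ x ∈ alphabet, ∀ i ≤ s.length,
    ¬ Sparse u.toFinset.card (s.insertIdx i x) ∨ ContainsCopy (s.insertIdx i x) u

/-- `s` is `u`-semisaturated over `alphabet`: like saturation, but `s` itself is allowed
to contain a copy of `u`. -/
def Semisaturated {α A : Type*} [DecidableEq α] (u : List α) (s : List A)
    (alphabet : Set A) : Prop :=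
  Sparse u.toFinset.card s ∧ (∀ x ∈ s, x ∈ alphabet) ∧
  ∀ x ∈ alphabet, ∀ i ≤ s.length,
    ¬ Sparse u.toFinset.card (s.insertIdx i x) ∨ ContainsCopy (s.insertIdx i x) u

/-- The initial segment of length `len` of the periodic sequence `p,q,z,p,q,z,…`. -/
def seg3 {A : Type*} (p q z : A) (len : ℕ) : List A :=
  (List.range len).map (fun i => if i % 3 = 0 then p else if i % 3 = 1 then q else z)

/-- The recursively defined family `s[n]` over the alphabet `{1,…,n}`, where `L` is the
length of `s₃(u)`: `s[3]` is the copy of `s₃(u)` on `1,2,3`, and `s[n]` is `s[n-1]`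
followed by the copy of `s₃(u)` on `x,y,n` with its first two letters removed, `x,y`
being the last two letters of `s[n-1]`. -/
def sFam (L : ℕ) : ℕ → List ℕ
  | 0 => []
  | 1 => []
  | 2 => []
  | 3 => seg3 1 2 3 L
  | (n + 4) =>
      let prev := sFam L (n + 3)
      prev ++ (seg3 (prev.getD (prev.length - 2) 0) (prev.getD (prev.length - 1) 0)
        (n + 4) L).drop 2

/-!
Every `s[n]` is a chain of overlapping blocks, the copies of `s₃(u)` (of length `L`) on triples
`x, y, m`, each new letter `m` entering as the third letter of its block. So `s[n]` is 3-sparse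
and any letter that recurs does so exactly three positions later. Suppose inserting `m` at
position `g` keeps 3-sparsity. Then every occurrence of `m` is at least 3 before or 2 after `g`,
and by the period-3 recurrence `m` cannot occur on both sides of `g`. If it occurs only before
`g`, the block ending two letters after an occurrence of `m` is followed by the inserted `m`; if
only after `g`, the inserted `m` precedes the block in which `m` first appears. Either way we get
a copy of the periodic segment of length `L + 1`, which contains `u` by the maximality of `L`.
-/

theorem ContainsCopy.trans {α β γ : Type*} {t : List γ} {v : List β} {u : List α}
    (htv : ContainsCopy t v) (hvu : ContainsCopy v u) : ContainsCopy t u := by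
  obtain ⟨_, hwt, g, hg, rfl⟩ := htv
  obtain ⟨-, hsub, f, hf, rfl⟩ := hvu
  refine ⟨(u.map f).map g, (hsub.map g).trans hwt, g ∘ f, fun x hx y hy hxy => ?_, by simp⟩
  exact hf x hx y hy (hg _ (hsub.subset (List.mem_map_of_mem hx)) _
    (hsub.subset (List.mem_map_of_mem hy)) hxy)

theorem ContainsCopy.length_le {α β : Type*} {s : List β} {u : List α} (h : ContainsCopy s u) :
    u.length ≤ s.length := by
  obtain ⟨v, hv, f, -, rfl⟩ := h
  simpa using hv.length_le

namespace SemisaturatedFamily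

def pat {A : Type*} (p q r : A) (i : ℕ) : A :=
  if i % 3 = 0 then p else if i % 3 = 1 then q else r

section Pattern

variable {A : Type*} {p q r : A}

@[simp]
theorem length_seg3 (len : ℕ) : (seg3 p q r len).length = len := by
  simp [seg3]

theorem seg3_eq_map_pat (len : ℕ) : seg3 p q r len = (List.range len).map (pat p q r) := rfl

theorem pat_congr {i j : ℕ} (h : i % 3 = j % 3) : pat p q r i = pat p q r j := by
  simp only [pat, h]

theorem pat_eq_or (i : ℕ) : pat p q r i = p ∨ pat p q r i = q ∨ pat p q r i = r := by
  unfold pat; split_ifs <;> simp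

theorem pat_succ (i : ℕ) : pat p q r (i + 1) = pat q r p i := by
  have h : (i + 1) % 3 = (i % 3 + 1) % 3 := by omega
  rcases (by omega : i % 3 = 0 ∨ i % 3 = 1 ∨ i % 3 = 2) with hi | hi | hi <;> simp [pat, h, hi]

theorem map_pat {B : Type*} (f : A → B) (i : ℕ) :
    f (pat p q r i) = pat (f p) (f q) (f r) i := by
  unfold pat; split_ifs <;> rfl

theorem mod_three_eq_of_pat_eq (hpq : p ≠ q) (hpr : p ≠ r) (hqr : q ≠ r) {i j : ℕ}
    (h : pat p q r i = pat p q r j) : i % 3 = j % 3 := by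
  unfold pat at h; split_ifs at h <;> first | omega | simp_all

theorem pat_ne (hpq : p ≠ q) (hpr : p ≠ r) (hqr : q ≠ r) {i j : ℕ} (hij : i < j)
    (hj : j < i + 3) : pat p q r i ≠ pat p q r j := fun h => by
  have := mod_three_eq_of_pat_eq hpq hpr hqr h
  omega

theorem seg3_succ (k : ℕ) : seg3 p q r (k + 1) = seg3 p q r k ++ [pat p q r k] := by
  simp [seg3_eq_map_pat, List.range_succ]

theorem seg3_succ_eq_cons (k : ℕ) : seg3 p q r (k + 1) = p :: seg3 q r p k := by
  simp only [seg3_eq_map_pat, List.range_succ_eq_map, List.map_cons, List.map_map,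
    Function.comp_def, pat_succ]
  simp [pat]

theorem map_seg3 {B : Type*} (f : A → B) (k : ℕ) :
    (seg3 p q r k).map f = seg3 (f p) (f q) (f r) k := by
  simp [seg3_eq_map_pat, Function.comp_def, map_pat]

theorem isCopy_seg3 (hpq : p ≠ q) (hpr : p ≠ r) (hqr : q ≠ r) (k : ℕ) :
    IsCopy (seg3 p q r k) (seg3 1 2 3 k) := by
  refine ⟨fun v => if v = 1 then p else if v = 2 then q else r, ?_, by simp [map_seg3]⟩
  have mem : ∀ x ∈ seg3 1 2 3 k, x = 1 ∨ x = 2 ∨ x = 3 := by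
    simp only [seg3_eq_map_pat, List.mem_map]
    rintro x ⟨i, -, rfl⟩
    exact pat_eq_or i
  intro x hx y hy hxy
  rcases mem x hx with rfl | rfl | rfl <;> rcases mem y hy with rfl | rfl | rfl <;> simp_all

end Pattern

theorem containsCopy_of_seg3_sublist {α : Type*} {u : List α} {L : ℕ}
    (hmax : ContainsCopy (seg3 1 2 3 (L + 1)) u) {p q r : ℕ} (hpq : p ≠ q) (hpr : p ≠ r)
    (hqr : q ≠ r) {t : List ℕ} (h : (seg3 p q r (L + 1)).Sublist t) : ContainsCopy t u :=
  ContainsCopy.trans ⟨_, h, isCopy_seg3 hpq hpr hqr _⟩ hmax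

/-- Out-of-range positions read `0`, which is never a letter of `s[n]`. -/
def el (s : List ℕ) (i : ℕ) : ℕ := s.getD i 0

section Letters

theorem el_eq_getElem {s : List ℕ} {i : ℕ} (h : i < s.length) : el s i = s[i] :=
  List.getD_eq_getElem _ _ h

theorem el_append_left {s t : List ℕ} {i : ℕ} (h : i < s.length) : el (s ++ t) i = el s i :=
  List.getD_append _ _ _ _ h

theorem el_append_right {s t : List ℕ} {i : ℕ} (h : s.length ≤ i) :
    el (s ++ t) i = el t (i - s.length) :=
  List.getD_append_right _ _ _ _ h

theorem el_drop (s : List ℕ) (d i : ℕ) : el (s.drop d) i = el s (d + i) := by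
  simp only [el, List.getD_eq_getElem?_getD, List.getElem?_drop]

theorem el_seg3 {p q r len i : ℕ} (h : i < len) : el (seg3 p q r len) i = pat p q r i := by
  simp [el, seg3_eq_map_pat, h]

theorem sparse_iff_el (r : ℕ) (s : List ℕ) : Sparse r s ↔
    ∀ i j, i < j → j < i + r → j < s.length → el s i ≠ el s j := by
  refine forall_congr' fun i => forall_congr' fun j =>
    ⟨fun h hij hr hj => ?_, fun h hij hj hr => ?_⟩
  · rw [el_eq_getElem (hij.trans hj), el_eq_getElem hj]
    exact h hij hj hr
  · simpa [el_eq_getElem (hij.trans hj), el_eq_getElem hj] using h hij hr hj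

end Letters

def PeriodicAt (s : List ℕ) (D p q r K : ℕ) : Prop :=
  D + K ≤ s.length ∧ ∀ i < K, el s (D + i) = pat p q r i

namespace PeriodicAt

variable {s t : List ℕ} {D p q r K : ℕ}

theorem el_eq (h : PeriodicAt s D p q r K) {j : ℕ} (hDj : D ≤ j) (hj : j < D + K) :
    el s j = pat p q r (j - D) := by
  simpa [Nat.add_sub_cancel' hDj] using h.2 (j - D) (by omega)

theorem seg3_sublist (h : PeriodicAt s D p q r K) : (seg3 p q r K).Sublist s := by
  have hlen := h.1
  have hseg : seg3 p q r K = (s.drop D).take K := by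
    refine List.ext_getElem (by simp; omega) fun i h₁ h₂ => ?_
    have hi : i < K := by simpa using h₁
    have hel := h.2 i hi
    rw [el_eq_getElem (by omega)] at hel
    simp [seg3_eq_map_pat, hel]
  rw [hseg]
  exact (List.take_sublist _ _).trans (List.drop_sublist _ _)

theorem append_right (h : PeriodicAt s D p q r K) : PeriodicAt (s ++ t) D p q r K :=
  ⟨by have := h.1; simp; omega, fun i hi => by
    rw [el_append_left (by have := h.1; omega)]; exact h.2 i hi⟩

theorem of_append_left (h : PeriodicAt (s ++ t) D p q r K) (hDK : D + K ≤ s.length) :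
    PeriodicAt s D p q r K :=
  ⟨hDK, fun i hi => by rw [← el_append_left (t := t) (by omega)]; exact h.2 i hi⟩

theorem of_append_right (h : PeriodicAt (s ++ t) D p q r K) (hD : s.length ≤ D) :
    PeriodicAt t (D - s.length) p q r K :=
  ⟨by have := h.1; simp at this; omega, fun i hi => by
    rw [← h.2 i hi, el_append_right (by omega)]; congr 1; omega⟩

end PeriodicAt

def RecursAfterThree (s : List ℕ) : Prop :=
  ∀ i j, i < j → j < s.length → el s i = el s j → el s (i + 3) = el s i

theorem add_three_le_or_le_of_sparse_insert {l₁ l₂ : List ℕ} {m i : ℕ}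
    (h : Sparse 3 (l₁ ++ m :: l₂)) (hi : i < (l₁ ++ l₂).length)
    (hm : el (l₁ ++ l₂) i = m) :
    i + 3 ≤ l₁.length ∨ l₁.length + 2 ≤ i := by
  rw [sparse_iff_el] at h
  have hg : el (l₁ ++ m :: l₂) l₁.length = m := by simp [el]
  simp only [List.length_append, List.length_cons] at h hi
  by_contra! hnear
  rcases Nat.lt_or_ge i l₁.length with hlt | hge
  · refine h i l₁.length hlt (by omega) (by omega) ?_
    rw [hg, el_append_left hlt, ← hm, el_append_left hlt]
  · refine h l₁.length (i + 1) (by omega) (by omega) (by omega) ?_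
    rw [hg, el_append_right (by omega), ← hm, el_append_right hge,
      show i + 1 - l₁.length = (i - l₁.length) + 1 by omega]
    rfl

theorem not_occurs_both_sides {s : List ℕ} {m g : ℕ} (hrec : RecursAfterThree s)
    (hsep : ∀ i < s.length, el s i = m → i + 3 ≤ g ∨ g + 2 ≤ i)
    {i j : ℕ} (hi : i < g) (hmi : el s i = m) (hgj : g ≤ j) (hj : j < s.length)
    (hmj : el s j = m) : False := by
  have hj2 : g + 2 ≤ j := (hsep j hj hmj).resolve_left (by omega)
  obtain ⟨k, hk⟩ : ∃ k, g ≤ i + 3 * k := ⟨g, by omega⟩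
  induction k generalizing i with
  | zero => omega
  | succ k ih =>
    have hi3 : i + 3 ≤ g := (hsep i (by omega) hmi).resolve_right (by omega)
    have hmi3 : el s (i + 3) = m := by rw [hrec i j (by omega) hj (hmi.trans hmj.symm), hmi]
    rcases hi3.lt_or_eq with hlt | heq
    · exact ih hlt hmi3 (by omega)
    · have := hsep (i + 3) (by omega) hmi3
      omega

/-- Inserting `m` in front of the block at `f - 2` gives `seg3 m x y (L + 1)`. -/
def ExtendsLeft (L : ℕ) (s : List ℕ) (m : ℕ) : Prop :=
  ∃ f < s.length, el s f = m ∧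
    (2 ≤ f → ∃ x y, x ≠ y ∧ x ≠ m ∧ y ≠ m ∧ PeriodicAt s (f - 2) x y m L)

/-- Inserting `m` after the block ending at `l + 2` gives `seg3 p q r (L + 1)`. -/
def ExtendsRight (L : ℕ) (s : List ℕ) (m : ℕ) : Prop :=
  ∃ l < s.length, el s l = m ∧
    (l + 3 ≤ s.length → ∃ p q r, p ≠ q ∧ p ≠ r ∧ q ≠ r ∧ L ≤ l + 3 ∧
      PeriodicAt s (l + 3 - L) p q r L ∧ pat p q r L = m)

def EndsWithBlock (L : ℕ) (s : List ℕ) : Prop :=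
  ∃ p q r, p ≠ q ∧ p ≠ r ∧ q ≠ r ∧ L ≤ s.length ∧
    PeriodicAt s (s.length - L) p q r L

theorem extendsRight_pat {L : ℕ} {s : List ℕ} {p q r : ℕ} (hL : 3 ≤ L) (hpq : p ≠ q)
    (hpr : p ≠ r) (hqr : q ≠ r) (hLs : L ≤ s.length)
    (hper : PeriodicAt s (s.length - L) p q r L)
    (φ : ℕ) : ExtendsRight L s (pat p q r φ) := by
  -- `i` is the last index of the final block at which the letter `pat p q r φ` stands
  set i := L - 1 - (L - 1 - φ % 3) % 3
  have hiL : i < L ∧ L ≤ i + 3 ∧ i % 3 = φ % 3 := by omega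
  refine ⟨s.length - L + i, by omega, ?_, fun _ => ?_⟩
  · rw [hper.2 i hiL.1]
    exact pat_congr (by omega)
  · refine ⟨p, q, r, hpq, hpr, hqr, by omega, ?_, pat_congr (by omega)⟩
    rwa [show s.length - L + i + 3 - L = s.length - L by omega]

structure Invariant (L n : ℕ) (s : List ℕ) : Prop where
  sparse : Sparse 3 s
  el_mem : ∀ i < s.length, 1 ≤ el s i ∧ el s i ≤ n
  recurs : RecursAfterThree s
  extendsLeft : ∀ m, 1 ≤ m → m ≤ n → ExtendsLeft L s m
  extendsRight : ∀ m, 1 ≤ m → m ≤ n → ExtendsRight L s m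
  endsWithBlock : EndsWithBlock L s

namespace Invariant

variable {L n : ℕ} {s : List ℕ}

theorem containsCopy_insertIdx (hs : Invariant L n s) {α : Type*} {u : List α}
    (hmax : ContainsCopy (seg3 1 2 3 (L + 1)) u) {m g : ℕ} (hm1 : 1 ≤ m) (hmn : m ≤ n)
    (hg : g ≤ s.length) (hsp : Sparse 3 (s.insertIdx g m)) :
    ContainsCopy (s.insertIdx g m) u := by
  obtain ⟨l₁, l₂, rfl, rfl, hins⟩ := List.exists_of_modifyTailIdx (List.cons m) hg
  change (l₁ ++ l₂).insertIdx l₁.length m = l₁ ++ m :: l₂ at hins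
  rw [hins] at hsp ⊢
  have hsep := fun i hi hmi => add_three_le_or_le_of_sparse_insert hsp (i := i) hi hmi
  by_cases hbefore : ∃ i < l₁.length, el (l₁ ++ l₂) i = m
  · obtain ⟨i, hi, hmi⟩ := hbefore
    obtain ⟨l, hl, hml, hblock⟩ := hs.extendsRight m hm1 hmn
    have hlg : l < l₁.length := by
      by_contra! hle
      exact not_occurs_both_sides hs.recurs hsep hi hmi hle hl hml
    have hl3 : l + 3 ≤ l₁.length := (hsep l hl hml).resolve_right (by omega)
    obtain ⟨p, q, r, hpq, hpr, hqr, -, hper, hpat⟩ := hblock (by simp; omega)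
    refine containsCopy_of_seg3_sublist hmax hpq hpr hqr ?_
    rw [seg3_succ, hpat]
    exact (hper.of_append_left (by omega)).seg3_sublist.append
      ((List.nil_sublist l₂).cons_cons m)
  · push Not at hbefore
    obtain ⟨f, hf, hmf, hblock⟩ := hs.extendsLeft m hm1 hmn
    have hf2 : l₁.length + 2 ≤ f :=
      (hsep f hf hmf).resolve_left fun h => hbefore f (by omega) hmf
    obtain ⟨x, y, hxy, hxm, hym, hper⟩ := hblock (by omega)
    refine containsCopy_of_seg3_sublist hmax hxm.symm hym.symm hxy ?_
    rw [seg3_succ_eq_cons]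
    exact ((hper.of_append_right (by omega)).seg3_sublist.cons_cons m).trans
      (List.sublist_append_right _ _)

theorem semisaturated (hs : Invariant L n s) {α : Type*} [DecidableEq α] {u : List α}
    (hcard : u.toFinset.card = 3) (hmax : ContainsCopy (seg3 1 2 3 (L + 1)) u) :
    Semisaturated u s (Set.Icc 1 n) := by
  rw [Semisaturated, hcard]
  refine ⟨hs.sparse, fun x hx => ?_, fun m hm g hg => ?_⟩
  · obtain ⟨i, hi, rfl⟩ := List.getElem_of_mem hx
    rw [← el_eq_getElem hi]
    exact hs.el_mem i hi
  · by_cases hsp : Sparse 3 (s.insertIdx g m)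
    · exact Or.inr (hs.containsCopy_insertIdx hmax hm.1 hm.2 hg hsp)
    · exact Or.inl hsp

end Invariant

def appendBlock (L : ℕ) (s : List ℕ) (z : ℕ) : List ℕ :=
  s ++ (seg3 (el s (s.length - 2)) (el s (s.length - 1)) z L).drop 2

section AppendBlock

variable {L : ℕ} {s : List ℕ} {z : ℕ}

theorem length_appendBlock : (appendBlock L s z).length = s.length + (L - 2) := by
  simp [appendBlock]

theorem el_appendBlock_of_lt {i : ℕ} (h : i < s.length) : el (appendBlock L s z) i = el s i :=
  el_append_left h

theorem periodicAt_appendBlock (hL : 2 ≤ L) (hs : 2 ≤ s.length) :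
    PeriodicAt (appendBlock L s z) (s.length - 2) (el s (s.length - 2)) (el s (s.length - 1))
      z L := by
  refine ⟨by rw [length_appendBlock]; omega, fun i hi => ?_⟩
  rcases (by omega : i = 0 ∨ i = 1 ∨ 2 ≤ i) with rfl | rfl | h2
  · rw [el_appendBlock_of_lt (by omega)]; rfl
  · rw [el_appendBlock_of_lt (by omega)]; simp [pat, show s.length - 2 + 1 = s.length - 1 by omega]
  · rw [appendBlock, el_append_right (by omega), el_drop,
      show 2 + (s.length - 2 + i - s.length) = i by omega, el_seg3 hi]

end AppendBlock

namespace Invariant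

variable {L n : ℕ} {s : List ℕ}

theorem add_three_le (hs : Invariant L n s) {i j : ℕ} (hij : i < j) (hj : j < s.length)
    (heq : el s i = el s j) : i + 3 ≤ j := by
  by_contra! h
  exact (sparse_iff_el 3 s).1 hs.sparse i j hij (by omega) hj heq

theorem two_le_length (hL : 2 ≤ L) (hs : Invariant L n s) : 2 ≤ s.length := by
  obtain ⟨-, -, -, -, -, -, hLs, -⟩ := hs.endsWithBlock
  omega

theorem block_appendBlock (hL : 3 ≤ L) (hs : Invariant L n s) :
    el s (s.length - 2) ≠ el s (s.length - 1) ∧ el s (s.length - 2) ≠ n + 1 ∧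
      el s (s.length - 1) ≠ n + 1 ∧
      PeriodicAt (appendBlock L s (n + 1)) (s.length - 2) (el s (s.length - 2))
        (el s (s.length - 1)) (n + 1) L := by
  obtain ⟨p, q, r, hpq, hpr, hqr, hLs, hper⟩ := hs.endsWithBlock
  have hx := (hs.el_mem (s.length - 2) (by omega)).2
  have hy := (hs.el_mem (s.length - 1) (by omega)).2
  refine ⟨?_, by omega, by omega, periodicAt_appendBlock (by omega) (by omega)⟩
  rw [hper.el_eq (by omega) (by omega), hper.el_eq (by omega) (by omega)]
  exact pat_ne hpq hpr hqr (by omega) (by omega)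

theorem sparse_appendBlock (hL : 3 ≤ L) (hs : Invariant L n s) :
    Sparse 3 (appendBlock L s (n + 1)) := by
  obtain ⟨hxy, hxz, hyz, hwin⟩ := hs.block_appendBlock hL
  have hsp := (sparse_iff_el 3 s).1 hs.sparse
  rw [sparse_iff_el]
  intro i j hij hj3 hj
  rw [length_appendBlock] at hj
  rcases Nat.lt_or_ge j s.length with hjs | hjs
  · rw [el_appendBlock_of_lt (by omega), el_appendBlock_of_lt hjs]
    exact hsp i j hij hj3 hjs
  · rw [hwin.el_eq (by omega) (by omega), hwin.el_eq (by omega) (by omega)]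
    exact pat_ne hxy hxz hyz (by omega) (by omega)

theorem el_mem_appendBlock (hL : 3 ≤ L) (hs : Invariant L n s) :
    ∀ i < (appendBlock L s (n + 1)).length, 1 ≤ el (appendBlock L s (n + 1)) i ∧
      el (appendBlock L s (n + 1)) i ≤ n + 1 := by
  obtain ⟨-, -, -, hwin⟩ := hs.block_appendBlock hL
  have hx := hs.el_mem (s.length - 2) (by have := hs.two_le_length (by omega); omega)
  have hy := hs.el_mem (s.length - 1) (by have := hs.two_le_length (by omega); omega)
  intro i hi
  rw [length_appendBlock] at hi
  rcases Nat.lt_or_ge i s.length with his | his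
  · rw [el_appendBlock_of_lt his]
    have := hs.el_mem i his
    omega
  · rw [hwin.el_eq (by omega) (by omega)]
    rcases pat_eq_or (p := el s (s.length - 2)) (q := el s (s.length - 1)) (r := n + 1)
      (i - (s.length - 2)) with h | h | h <;> omega

theorem recurs_appendBlock (hL : 3 ≤ L) (hs : Invariant L n s) :
    RecursAfterThree (appendBlock L s (n + 1)) := by
  obtain ⟨hxy, hxz, hyz, hwin⟩ := hs.block_appendBlock hL
  intro i j hij hj heq
  rw [length_appendBlock] at hj
  rcases Nat.lt_or_ge j s.length with hjs | hjs
  · rw [el_appendBlock_of_lt (by omega), el_appendBlock_of_lt hjs] at heq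
    have := hs.add_three_le hij hjs heq
    rw [el_appendBlock_of_lt (by omega), el_appendBlock_of_lt (by omega)]
    exact hs.recurs i j hij hjs heq
  rcases Nat.lt_or_ge i (s.length - 2) with his | his
  · -- `el s i ≤ n`, so the later occurrence is one of the last two letters of `s`
    rw [el_appendBlock_of_lt (by omega), hwin.el_eq (by omega) (by omega)] at heq
    have hin := (hs.el_mem i (by omega)).2
    obtain ⟨j', hj', hij', heq'⟩ : ∃ j' < s.length, i < j' ∧ el s i = el s j' := by
      rcases pat_eq_or (p := el s (s.length - 2)) (q := el s (s.length - 1)) (r := n + 1)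
        (j - (s.length - 2)) with h | h | h
      · exact ⟨s.length - 2, by omega, his, heq.trans h⟩
      · exact ⟨s.length - 1, by omega, by omega, heq.trans h⟩
      · omega
    have := hs.add_three_le hij' hj' heq'
    rw [el_appendBlock_of_lt (by omega), el_appendBlock_of_lt (by omega)]
    exact hs.recurs i j' hij' hj' heq'
  · rw [hwin.el_eq his (by omega), hwin.el_eq (by omega) (by omega)] at heq
    have hmod := mod_three_eq_of_pat_eq hxy hxz hyz heq
    rw [hwin.el_eq (by omega) (by omega), hwin.el_eq his (by omega)]
    exact pat_congr (by omega)

theorem extendsLeft_appendBlock (hL : 3 ≤ L) (hs : Invariant L n s) {m : ℕ} (hm1 : 1 ≤ m)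
    (hmn : m ≤ n + 1) : ExtendsLeft L (appendBlock L s (n + 1)) m := by
  obtain ⟨hxy, hxz, hyz, hwin⟩ := hs.block_appendBlock hL
  rcases hmn.lt_or_eq with hmn | rfl
  · obtain ⟨f, hf, hmf, hblock⟩ := hs.extendsLeft m hm1 (by omega)
    refine ⟨f, by rw [length_appendBlock]; omega, by rw [el_appendBlock_of_lt hf, hmf],
      fun h2 => ?_⟩
    obtain ⟨x, y, hxy', hxm, hym, hper⟩ := hblock h2
    exact ⟨x, y, hxy', hxm, hym, hper.append_right⟩
  · have := hs.two_le_length (by omega)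
    refine ⟨s.length, by rw [length_appendBlock]; omega, ?_, fun _ => ?_⟩
    · rw [hwin.el_eq (by omega) (by omega), show s.length - (s.length - 2) = 2 by omega]
      rfl
    · exact ⟨_, _, hxy, hxz, hyz, hwin⟩

theorem extendsRight_appendBlock (hL : 3 ≤ L) (hs : Invariant L n s) {m : ℕ} (hm1 : 1 ≤ m)
    (hmn : m ≤ n + 1) : ExtendsRight L (appendBlock L s (n + 1)) m := by
  obtain ⟨hxy, hxz, hyz, hwin⟩ := hs.block_appendBlock hL
  have h2 := hs.two_le_length (by omega)
  have hlen : (appendBlock L s (n + 1)).length - L = s.length - 2 := by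
    rw [length_appendBlock]; omega
  by_cases hnew : m = el s (s.length - 2) ∨ m = el s (s.length - 1) ∨ m = n + 1
  · obtain ⟨φ, rfl⟩ :
        ∃ φ, pat (el s (s.length - 2)) (el s (s.length - 1)) (n + 1) φ = m := by
      rcases hnew with rfl | rfl | rfl
      exacts [⟨0, rfl⟩, ⟨1, rfl⟩, ⟨2, rfl⟩]
    exact extendsRight_pat hL hxy hxz hyz (by rw [length_appendBlock]; omega) (hlen ▸ hwin) φ
  · push Not at hnew
    obtain ⟨hmx, hmy, hmz⟩ := hnew
    obtain ⟨l, hl, hml, hblock⟩ := hs.extendsRight m hm1 (by omega)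
    have hl3 : l + 3 ≤ s.length := by
      clear hblock
      by_contra! h
      rcases (by omega : l = s.length - 2 ∨ l = s.length - 1) with rfl | rfl
      exacts [hmx hml.symm, hmy hml.symm]
    refine ⟨l, by rw [length_appendBlock]; omega, by rw [el_appendBlock_of_lt hl, hml],
      fun _ => ?_⟩
    obtain ⟨p, q, r, hpq, hpr, hqr, hLl, hper, hpat⟩ := hblock hl3
    exact ⟨p, q, r, hpq, hpr, hqr, hLl, hper.append_right, hpat⟩

theorem endsWithBlock_appendBlock (hL : 3 ≤ L) (hs : Invariant L n s) :
    EndsWithBlock L (appendBlock L s (n + 1)) := by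
  obtain ⟨hxy, hxz, hyz, hwin⟩ := hs.block_appendBlock hL
  have h2 := hs.two_le_length (by omega)
  have hlen : (appendBlock L s (n + 1)).length - L = s.length - 2 := by
    rw [length_appendBlock]; omega
  exact ⟨_, _, _, hxy, hxz, hyz, by rw [length_appendBlock]; omega, hlen ▸ hwin⟩

theorem appendBlock (hL : 3 ≤ L) (hs : Invariant L n s) :
    Invariant L (n + 1) (appendBlock L s (n + 1)) :=
  ⟨hs.sparse_appendBlock hL, hs.el_mem_appendBlock hL, hs.recurs_appendBlock hL,
    fun _ hm1 hmn => hs.extendsLeft_appendBlock hL hm1 hmn,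
    fun _ hm1 hmn => hs.extendsRight_appendBlock hL hm1 hmn, hs.endsWithBlock_appendBlock hL⟩

end Invariant

theorem invariant_seg3 {L : ℕ} (hL : 3 ≤ L) : Invariant L 3 (seg3 1 2 3 L) := by
  have hper : PeriodicAt (seg3 1 2 3 L) 0 1 2 3 L :=
    ⟨by simp, fun i hi => by rw [Nat.zero_add, el_seg3 hi]⟩
  have h12 : (1 : ℕ) ≠ 2 := by decide
  have h13 : (1 : ℕ) ≠ 3 := by decide
  have h23 : (2 : ℕ) ≠ 3 := by decide
  refine ⟨?_, fun i hi => ?_, fun i j hij hj heq => ?_, fun m hm1 hm3 => ?_, fun m hm1 hm3 => ?_,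
    ⟨1, 2, 3, h12, h13, h23, by simp, by simpa using hper⟩⟩
  · rw [sparse_iff_el]
    intro i j hij hj3 hj
    simp only [length_seg3] at hj
    rw [el_seg3 (by omega), el_seg3 hj]
    exact pat_ne h12 h13 h23 hij hj3
  · simp only [length_seg3] at hi
    rw [el_seg3 hi]
    rcases pat_eq_or (p := 1) (q := 2) (r := 3) i with h | h | h <;> omega
  · simp only [length_seg3] at hj
    rw [el_seg3 (by omega), el_seg3 hj] at heq
    have := mod_three_eq_of_pat_eq h12 h13 h23 heq
    rw [el_seg3 (by omega), el_seg3 (by omega)]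
    exact pat_congr (by omega)
  · refine ⟨m - 1, by simp; omega, ?_, fun h2 => ⟨1, 2, ?_⟩⟩
    · rw [el_seg3 (by omega)]
      interval_cases m <;> rfl
    · obtain rfl : m = 3 := by omega
      exact ⟨h12, h13, h23, hper⟩
  · have hm : pat 1 2 3 (m - 1) = m := by interval_cases m <;> rfl
    rw [← hm]
    exact extendsRight_pat hL h12 h13 h23 (by simp) (by simpa using hper) (m - 1)

theorem invariant_sFam {L : ℕ} (hL : 3 ≤ L) (k : ℕ) : Invariant L (k + 3) (sFam L (k + 3)) := by
  induction k with
  | zero => exact invariant_seg3 hL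
  | succ k ih => exact ih.appendBlock hL

end SemisaturatedFamily

open SemisaturatedFamily in
theorem stmt13_general {α : Type*} [DecidableEq α] (u : List α) (a b c : α)
    (hlen : 6 ≤ u.length)
    (hab : a ≠ b) (hac : a ≠ c) (hbc : b ≠ c)
    (hletters : u.toFinset = {a, b, c})
    (L : ℕ)
    (hmax : ContainsCopy (seg3 1 2 3 (L + 1)) u) :
    ∀ n : ℕ, 3 ≤ n → Semisaturated u (sFam L n) (Set.Icc 1 n) := by
  have hcard : u.toFinset.card = 3 := by
    rw [hletters, Finset.card_eq_three]
    exact ⟨a, b, c, hab, hac, hbc, rfl⟩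
  have hL : 3 ≤ L := by
    have := hmax.length_le
    simp only [length_seg3] at this
    omega
  intro n hn
  obtain ⟨k, rfl⟩ : ∃ k, n = k + 3 := ⟨n - 3, by omega⟩
  exact (invariant_sFam hL k).semisaturated hcard hmax

theorem stmt13 {α : Type*} [DecidableEq α] (u : List α) (a b c : α)
    (hlen : 6 ≤ u.length)
    (hab : a ≠ b) (hac : a ≠ c) (hbc : b ≠ c)
    (hletters : u.toFinset = {a, b, c})
    (hfirst : u.take 3 = [a, b, c])
    -- the last three letters of `u` form a permutation of `{a,b,c}`:
    (hlast : ∃ x y z : α, u.drop (u.length - 3) = [x, y, z] ∧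
      ({x, y, z} : Finset α) = {a, b, c})
    (L : ℕ)
    -- `L` is the length of `s₃(u)`, the longest initial segment of `1,2,3,1,2,3,…`
    -- avoiding `u`:
    (havoid : ¬ ContainsCopy (seg3 1 2 3 L) u)
    (hmax : ContainsCopy (seg3 1 2 3 (L + 1)) u) :
    ∀ n : ℕ, 3 ≤ n → Semisaturated u (sFam L n) (Set.Icc 1 n) :=
  stmt13_general u a b c hlen hab hac hbc hletters L hmax
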